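/- Postprocessing corollary: assume D satisfies RIP((A+1)n) with constant δ := δ_{(A+1)n} < 1, and suppose f_{An} = Φc^{An} with #supp(c^{An}) ≤ An satisfies ‖f − f_{An}‖ ≤ C σ_n(f). Let T be a set of indices of n largest (in absolute value) entries of c^{An}, and f_n* := Φ(c^{An}_T). Then ‖f − f_n*‖ ≤ C* σ_n(f), where C* = 2 + 3(C+2)√((1+δ)/(1−δ)). -/

import Mathlib

open scoped RealInnerProductSpace BigOperators

/-- The synthesis operator of a dictionary: `Φ c = ∑ γ c_γ φ_γ`. -/
noncomputable def dictSum {Γ H : Type*} [NormedAddCommGroup H] [InnerProductSpace ℝ H]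
    (φ : Γ → H) (c : Γ →₀ ℝ) : H :=
  c.sum fun γ a => a • φ γ

/-- The squared ℓ² norm of a finitely supported sequence. -/
noncomputable def l2normSq {Γ : Type*} (c : Γ →₀ ℝ) : ℝ :=
  ∑ γ ∈ c.support, (c γ) ^ 2

/-- The restricted isometry property of order `m` with constant `δ`. -/
def RIP {Γ H : Type*} [NormedAddCommGroup H] [InnerProductSpace ℝ H]
    (φ : Γ → H) (m : ℕ) (δ : ℝ) : Prop :=
  ∀ c : Γ →₀ ℝ, c.support.card ≤ m →
    (1 - δ) * l2normSq c ≤ ‖dictSum φ c‖ ^ 2 ∧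
    ‖dictSum φ c‖ ^ 2 ≤ (1 + δ) * l2normSq c

/-- The set `Σ_n` of `n`-term linear combinations from the dictionary. -/
def SigmaN {Γ H : Type*} [NormedAddCommGroup H] [InnerProductSpace ℝ H]
    (φ : Γ → H) (n : ℕ) : Set H :=
  {g | ∃ c : Γ →₀ ℝ, c.support.card ≤ n ∧ dictSum φ c = g}

/-- The error of best `n`-term approximation. -/
noncomputable def bestErr {Γ H : Type*} [NormedAddCommGroup H] [InnerProductSpace ℝ H]
    (φ : Γ → H) (n : ℕ) (f : H) : ℝ :=
  sInf ((fun g => ‖f - g‖) '' SigmaN φ n)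

/-!
Choose `c` with `#supp c ≤ n` and `Φc` nearly optimal. Since `T` carries the `n` largest entries
of `c^{An}`, the restriction `c^{An}_T` is at least as close to `c^{An}` in `ℓ²` as `c` is, so
`‖c - c^{An}_T‖ ≤ 2 ‖c - c^{An}‖` in `ℓ²`. Both differences have support at most `(A+1)n`, and
RIP transfers this to `‖Φ(c - c^{An}_T)‖ ≤ 2 √((1+δ)/(1-δ)) ‖Φc - f_{An}‖`. The triangle
inequality through `Φc` and an infimum over `c` finish the proof.
-/

namespace Finset

variable {ι M : Type*} [AddCommMonoid M] [LinearOrder M] [IsOrderedAddMonoid M]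

theorem sum_le_sum_of_card_le_of_forall_le {s t : Finset ι} {f : ι → M} (hcard : #s ≤ #t)
    (hle : ∀ i ∈ s, ∀ j ∈ t, f i ≤ f j) (hf : ∀ j ∈ t, 0 ≤ f j) :
    ∑ i ∈ s, f i ≤ ∑ j ∈ t, f j := by
  rcases t.eq_empty_or_nonempty with rfl | ht
  · rw [card_eq_zero.mp (Nat.le_zero.mp hcard)]
  · set m := t.inf' ht f
    calc ∑ i ∈ s, f i ≤ #s • m := sum_le_card_nsmul _ _ _ fun i hi => le_inf' ht f (hle i hi)
      _ ≤ #t • m := nsmul_le_nsmul_left (le_inf' ht f hf) hcard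
      _ ≤ ∑ j ∈ t, f j := card_nsmul_le_sum _ _ _ fun j hj => inf'_le f hj

theorem sum_le_sum_of_card_le_of_le_of_notMem [DecidableEq ι] {s t : Finset ι} {f : ι → M}
    (hcard : #s ≤ #t) (ht : ∀ j ∈ t, ∀ i ∉ t, f i ≤ f j) (hf : ∀ j ∈ t, 0 ≤ f j) :
    ∑ i ∈ s, f i ≤ ∑ j ∈ t, f j := by
  rw [← sum_inter_add_sum_sdiff s t, ← sum_inter_add_sum_sdiff t s, inter_comm]
  gcongr 1
  refine sum_le_sum_of_card_le_of_forall_le (card_sdiff_le_card_sdiff_iff.mpr hcard) ?_ ?_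
  · intro i hi j hj
    exact ht j (mem_sdiff.mp hj).1 i (mem_sdiff.mp hi).2
  · exact fun j hj => hf j (mem_sdiff.mp hj).1

end Finset

section Dictionary

open Finset

variable {Γ H : Type*} [NormedAddCommGroup H] [InnerProductSpace ℝ H]

theorem dictSum_eq_linearCombination (φ : Γ → H) (c : Γ →₀ ℝ) :
    dictSum φ c = Finsupp.linearCombination ℝ φ c :=
  (Finsupp.linearCombination_apply ℝ c).symm

theorem dictSum_sub (φ : Γ → H) (a b : Γ →₀ ℝ) :
    dictSum φ (a - b) = dictSum φ a - dictSum φ b := by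
  simp only [dictSum_eq_linearCombination, map_sub]

theorem zero_mem_sigmaN (φ : Γ → H) (n : ℕ) : (0 : H) ∈ SigmaN φ n :=
  ⟨0, by simp, by simp [dictSum_eq_linearCombination]⟩

theorem bestErr_nonneg (φ : Γ → H) (n : ℕ) (f : H) : 0 ≤ bestErr φ n f :=
  Real.sInf_nonneg (by rintro x ⟨g, _, rfl⟩; positivity)

theorem le_mul_bestErr_add {φ : Γ → H} {n : ℕ} {f : H} {x a b : ℝ} (hb : 0 < b)
    (h : ∀ g ∈ SigmaN φ n, x ≤ b * ‖f - g‖ + a) : x ≤ b * bestErr φ n f + a := by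
  have : (x - a) / b ≤ bestErr φ n f := by
    refine le_csInf ⟨_, _, zero_mem_sigmaN φ n, rfl⟩ ?_
    rintro y ⟨g, hg, rfl⟩
    rw [div_le_iff₀ hb]
    linarith [h g hg]
  rw [div_le_iff₀ hb] at this
  linarith

theorem RIP.norm_dictSum_le {φ : Γ → H} {m : ℕ} {δ : ℝ} (hRIP : RIP φ m δ) (hδ0 : 0 ≤ δ)
    (hδ : δ < 1) {a b : Γ →₀ ℝ} (ha : #a.support ≤ m) (hb : #b.support ≤ m) {k : ℝ} (hk : 0 ≤ k)
    (hab : l2normSq a ≤ k ^ 2 * l2normSq b) :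
    ‖dictSum φ a‖ ≤ k * Real.sqrt ((1 + δ) / (1 - δ)) * ‖dictSum φ b‖ := by
  have h1δ : 0 < 1 - δ := by linarith
  refine le_of_sq_le_sq ?_ (by positivity)
  calc ‖dictSum φ a‖ ^ 2 ≤ (1 + δ) * l2normSq a := (hRIP a ha).2
    _ ≤ (1 + δ) * (k ^ 2 * l2normSq b) := by gcongr
    _ ≤ (1 + δ) * (k ^ 2 * (‖dictSum φ b‖ ^ 2 / (1 - δ))) := by
        gcongr
        rw [le_div_iff₀ h1δ, mul_comm]
        exact (hRIP b hb).1
    _ = (k * Real.sqrt ((1 + δ) / (1 - δ)) * ‖dictSum φ b‖) ^ 2 := by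
        rw [mul_pow, mul_pow, Real.sq_sqrt (by positivity)]; ring

end Dictionary

section SequenceSpace

open Finset

variable {Γ : Type*}

theorem l2normSq_eq_sum_of_support_subset (c : Γ →₀ ℝ) {U : Finset Γ} (h : c.support ⊆ U) :
    l2normSq c = ∑ γ ∈ U, c γ ^ 2 :=
  sum_subset h fun γ _ hγ => by simp [Finsupp.notMem_support_iff.mp hγ]

theorem l2normSq_add_le [DecidableEq Γ] (a b : Γ →₀ ℝ) :
    l2normSq (a + b) ≤ 2 * (l2normSq a + l2normSq b) := by
  rw [l2normSq_eq_sum_of_support_subset (a + b) Finsupp.support_add,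
    l2normSq_eq_sum_of_support_subset a subset_union_left,
    l2normSq_eq_sum_of_support_subset b subset_union_right, ← sum_add_distrib, mul_sum]
  exact sum_le_sum fun γ _ => add_sq_le

theorem card_support_sub_le [DecidableEq Γ] (a b : Γ →₀ ℝ) :
    #(a - b).support ≤ #a.support + #b.support :=
  (card_le_card Finsupp.support_sub).trans (card_union_le _ _)

theorem card_support_filter_le (p : Γ → Prop) [DecidablePred p] (c : Γ →₀ ℝ) :
    #(c.filter p).support ≤ #c.support := by
  rw [Finsupp.support_filter]
  exact card_filter_le _ _

theorem l2normSq_sub_filter_le [DecidableEq Γ] {d : Γ →₀ ℝ} {T : Finset Γ}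
    (hT : ∀ γ ∈ T, ∀ γ' ∉ T, |d γ'| ≤ |d γ|) {c : Γ →₀ ℝ} (hc : #c.support ≤ #T) :
    l2normSq (d - d.filter (· ∈ T)) ≤ l2normSq (c - d) := by
  set U := d.support ∪ c.support ∪ T
  have hdU : d.support ⊆ U := subset_union_left.trans subset_union_left
  have hcU : c.support ⊆ U := subset_union_right.trans subset_union_left
  have hTU : T ⊆ U := subset_union_right
  have hlargest : ∑ γ ∈ c.support, d γ ^ 2 ≤ ∑ γ ∈ T, d γ ^ 2 :=
    sum_le_sum_of_card_le_of_le_of_notMem hc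
      (fun γ hγ γ' hγ' => sq_le_sq.mpr (hT γ hγ γ' hγ')) fun _ _ => sq_nonneg _
  calc l2normSq (d - d.filter (· ∈ T))
      = ∑ γ ∈ U, (d γ ^ 2 - if γ ∈ T then d γ ^ 2 else 0) := by
        rw [l2normSq_eq_sum_of_support_subset _
          ((Finsupp.support_sub).trans (union_subset hdU ((filter_subset _ _).trans hdU)))]
        refine sum_congr rfl fun γ _ => ?_
        by_cases hγ : γ ∈ T <;> simp [hγ]
    _ = ∑ γ ∈ U, d γ ^ 2 - ∑ γ ∈ T, d γ ^ 2 := by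
        rw [sum_sub_distrib, sum_ite_mem, inter_eq_right.mpr hTU]
    _ ≤ ∑ γ ∈ U, d γ ^ 2 - ∑ γ ∈ c.support, d γ ^ 2 := by gcongr
    _ = ∑ γ ∈ U, (d γ ^ 2 - if γ ∈ c.support then d γ ^ 2 else 0) := by
        rw [sum_sub_distrib, sum_ite_mem, inter_eq_right.mpr hcU]
    _ ≤ ∑ γ ∈ U, (c - d) γ ^ 2 := by
        refine sum_le_sum fun γ _ => ?_
        split_ifs with hγ
        · rw [sub_self]
          exact sq_nonneg _
        · simp [Finsupp.notMem_support_iff.mp hγ]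
    _ = l2normSq (c - d) :=
        (l2normSq_eq_sum_of_support_subset _ ((Finsupp.support_sub).trans (union_subset hcU hdU))).symm

end SequenceSpace

section Postprocessing

open Finset

variable {Γ H : Type*} [NormedAddCommGroup H] [InnerProductSpace ℝ H]

theorem norm_sub_dictSum_filter_le [DecidableEq Γ] {φ : Γ → H} {A n : ℕ} {δ : ℝ}
    (hRIP : RIP φ ((A + 1) * n) δ) (hδ0 : 0 ≤ δ) (hδ : δ < 1)
    {d : Γ →₀ ℝ} (hd : #d.support ≤ A * n) {T : Finset Γ} (hTcard : #T = n)
    (hT : ∀ γ ∈ T, ∀ γ' ∉ T, |d γ'| ≤ |d γ|) {c : Γ →₀ ℝ} (hc : #c.support ≤ n) (f : H) :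
    ‖f - dictSum φ (d.filter (· ∈ T))‖ ≤ ‖f - dictSum φ c‖ +
      2 * Real.sqrt ((1 + δ) / (1 - δ)) * (‖f - dictSum φ c‖ + ‖f - dictSum φ d‖) := by
  set dT := d.filter (· ∈ T)
  have hcoef : l2normSq (c - dT) ≤ 2 ^ 2 * l2normSq (c - d) := by
    have hthresh := l2normSq_sub_filter_le hT (hTcard ▸ hc : #c.support ≤ #T)
    calc l2normSq (c - dT) = l2normSq ((c - d) + (d - dT)) := by rw [sub_add_sub_cancel]
      _ ≤ 2 * (l2normSq (c - d) + l2normSq (d - dT)) := l2normSq_add_le _ _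
      _ ≤ 2 ^ 2 * l2normSq (c - d) := by linarith
  have hsupp : ∀ e : Γ →₀ ℝ, #e.support ≤ A * n → #(c - e).support ≤ (A + 1) * n :=
    fun e he => (card_support_sub_le c e).trans (by rw [add_one_mul]; omega)
  have hRIPbound := hRIP.norm_dictSum_le hδ0 hδ
    (hsupp dT ((card_support_filter_le _ d).trans hd)) (hsupp d hd) zero_le_two hcoef
  calc ‖f - dictSum φ dT‖ ≤ ‖f - dictSum φ c‖ + ‖dictSum φ (c - dT)‖ := by
        rw [dictSum_sub]
        exact norm_sub_le_norm_sub_add_norm_sub _ _ _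
    _ ≤ ‖f - dictSum φ c‖ + 2 * Real.sqrt ((1 + δ) / (1 - δ)) * ‖dictSum φ (c - d)‖ := by
        gcongr
    _ ≤ _ := by
        gcongr
        rw [dictSum_sub, norm_sub_rev f (dictSum φ c)]
        exact norm_sub_le_norm_sub_add_norm_sub _ _ _

end Postprocessing

theorem stmt13_postprocessing_general
    {Γ H : Type*} [DecidableEq Γ]
    [NormedAddCommGroup H] [InnerProductSpace ℝ H]
    (φ : Γ → H)
    (A n : ℕ)
    (δ : ℝ) (hδ0 : 0 ≤ δ) (hδ : δ < 1) (hRIP : RIP φ ((A + 1) * n) δ)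
    (f : H) (cAn : Γ →₀ ℝ) (hsupp : cAn.support.card ≤ A * n)
    (C : ℝ) (hC : 0 < C)
    (happrox : ‖f - dictSum φ cAn‖ ≤ C * bestErr φ n f)
    (T : Finset Γ) (hTcard : T.card = n)
    (hTlargest : ∀ γ ∈ T, ∀ γ' ∉ T, |cAn γ'| ≤ |cAn γ|) :
    ‖f - dictSum φ (cAn.filter (· ∈ T))‖
      ≤ (2 + 3 * (C + 2) * Real.sqrt ((1 + δ) / (1 - δ))) * bestErr φ n f := by
  set K := Real.sqrt ((1 + δ) / (1 - δ))
  set σ := bestErr φ n f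
  have hK : 0 ≤ K := Real.sqrt_nonneg _
  have hσ : 0 ≤ σ := bestErr_nonneg φ n f
  have hbound : ‖f - dictSum φ (cAn.filter (· ∈ T))‖ ≤ (1 + 2 * K) * σ + 2 * K * (C * σ) := by
    refine le_mul_bestErr_add (by positivity) ?_
    rintro g ⟨c, hc, rfl⟩
    calc _ ≤ ‖f - dictSum φ c‖ + 2 * K * (‖f - dictSum φ c‖ + ‖f - dictSum φ cAn‖) :=
          norm_sub_dictSum_filter_le hRIP hδ0 hδ hsupp hTcard hTlargest hc f
      _ ≤ ‖f - dictSum φ c‖ + 2 * K * (‖f - dictSum φ c‖ + C * σ) := by gcongr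
      _ = _ := by ring
  calc _ ≤ (1 + 2 * K) * σ + 2 * K * (C * σ) := hbound
    _ ≤ _ := by nlinarith [mul_nonneg hK hσ, mul_nonneg (mul_nonneg hK hσ) hC.le]

/-- Postprocessing corollary: if `f_{An} = Φc^{An}` is an `An`-term approximation with
`‖f − f_{An}‖ ≤ C σ_n(f)` and `T` is a set of `n` largest entries of `c^{An}`, then the
`n`-term approximation `f_n* = Φ(c^{An}_T)` satisfies
`‖f − f_n*‖ ≤ (2 + 3(C+2)√((1+δ)/(1−δ))) σ_n(f)`. -/
theorem stmt13_postprocessing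
    {Γ H : Type*} [Countable Γ] [DecidableEq Γ]
    [NormedAddCommGroup H] [InnerProductSpace ℝ H] [CompleteSpace H]
    (φ : Γ → H) (hnorm : ∀ γ, ‖φ γ‖ = 1)
    (A n : ℕ) (hn : 1 ≤ n)
    (δ : ℝ) (hδ0 : 0 ≤ δ) (hδ : δ < 1) (hRIP : RIP φ ((A + 1) * n) δ)
    (f : H) (cAn : Γ →₀ ℝ) (hsupp : cAn.support.card ≤ A * n)
    (C : ℝ) (hC : 0 < C)
    (happrox : ‖f - dictSum φ cAn‖ ≤ C * bestErr φ n f)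
    (T : Finset Γ) (hTcard : T.card = n)
    (hTlargest : ∀ γ ∈ T, ∀ γ' ∉ T, |cAn γ'| ≤ |cAn γ|) :
    ‖f - dictSum φ (cAn.filter (· ∈ T))‖
      ≤ (2 + 3 * (C + 2) * Real.sqrt ((1 + δ) / (1 - δ))) * bestErr φ n f :=
  stmt13_postprocessing_general φ A n δ hδ0 hδ hRIP f cAn hsupp C hC happrox T hTcard hTlargest
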